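/- Let A be a bicomplete abelian category (having all small limits and colimits), and let (𝒳, 𝒴) be a cotorsion pair of chain complexes over A, meaning 𝒳 = { X : Ext^1(X,Y) = 0 for all Y ∈ 𝒴 } and 𝒴 = { Y : Ext^1(X,Y) = 0 for all X ∈ 𝒳 }, where Ext^1 is computed in the abelian category Ch(A) of chain complexes over A. Let 𝒞 be a class of objects of A. If the disk complexes D^n(C) lie in 𝒳 for every integer n and every C ∈ 𝒞, then every bounded above acyclic chain complex all of whose cycle objects lie in 𝒞 is also in 𝒳. -/

import Mathlib

/-!
Maps `Dⁿ C ⟶ Y` of complexes are the same as maps `C ⟶ Yₙ`, and `Dⁿ` is exact, so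
`Ext¹(Dⁿ C, Y) = 0` forces `Ext¹(C, Yₙ) = 0`. Let `0 → Y → E → X → 0` be an extension with
`Y ∈ 𝒴`. Acyclicity of `X` gives short exact sequences `0 → Zₙ → Xₙ → Zₙ₋₁ → 0`, so
`Ext¹(Xₙ, Yₙ) = 0` and every `gₙ : Eₙ → Xₙ` has a section. Sections are then chosen downwards from
the top degree of `X`, keeping each one cycle-preserving: `σₙ ≫ d` kills `Zₙ`, hence factors
through `Xₙ ↠ Zₙ₋₁` as a lift of the inclusion `Zₙ₋₁ ⟶ Xₙ₋₁`, and `Ext¹(Zₙ₋₂, Yₙ₋₁) = 0`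
extends it to a section `σₙ₋₁` of `gₙ₋₁`; the square with the differentials then commutes.
-/

universe v u

open CategoryTheory Limits ZeroObject

/-- Vanishing of (Yoneda) `Ext¹(A, B)` in an abelian category: every short exact
sequence `0 → B → E → A → 0` splits. -/
def Ext1Vanishes {C : Type*} [Category C] [Abelian C] (A B : C) : Prop :=
  ∀ (E : C) (f : B ⟶ E) (g : E ⟶ A) (w : f ≫ g = 0),
    (ShortComplex.mk f g w).ShortExact → ∃ s : A ⟶ E, s ≫ g = 𝟙 A

variable {A : Type u} [Category.{v} A] [Abelian A]

/-- Components of the disk complex. -/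
noncomputable def diskX (n : ℤ) (C : A) : ℤ → A := fun k => if k = n ∨ k = n - 1 then C else 0

/-- The disk complex `D^n C`: `C` in degrees `n` and `n - 1`, with identity differential. -/
noncomputable def disk (n : ℤ) (C : A) : ChainComplex A ℤ where
  X := diskX n C
  d i j :=
    if h : i = n ∧ j = n - 1 then
      eqToHom (show diskX n C i = diskX n C j by
        simp [diskX, h.1, h.2, show ¬ (n - 1 = n) by omega])
    else 0
  shape i j hij := by
    try dsimp only
    rw [dif_neg]
    rintro ⟨rfl, rfl⟩
    exact hij (by simp [ComplexShape.down_Rel])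
  d_comp_d' i j k _ _ := by
    try dsimp only
    by_cases h1 : i = n ∧ j = n - 1
    · rw [dif_pos h1, dif_neg, comp_zero]
      rintro ⟨h2, -⟩
      obtain ⟨-, h3⟩ := h1
      omega
    · rw [dif_neg h1, zero_comp]


open Category

lemma ext1Vanishes_iff_exists_retraction {X Y : A} :
    Ext1Vanishes X Y ↔ ∀ (E : A) (f : Y ⟶ E) (g : E ⟶ X) (w : f ≫ g = 0),
      (ShortComplex.mk f g w).ShortExact → ∃ r : E ⟶ Y, f ≫ r = 𝟙 Y := by
  refine forall₄_congr fun E f g w => forall_congr' fun hS => ⟨?_, ?_⟩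
  · rintro ⟨s, hs⟩
    exact ⟨_, (ShortComplex.Splitting.ofExactOfSection _ hS.exact s hs hS.mono_f).f_r⟩
  · rintro ⟨r, hr⟩
    exact ⟨_, (ShortComplex.Splitting.ofExactOfRetraction _ hS.exact r hr hS.epi_g).s_g⟩

namespace CategoryTheory.ShortComplex.ShortExact

variable {S : ShortComplex A}

lemma pushout_inl (hS : S.ShortExact) {Y : A} (v : S.X₁ ⟶ Y) :
    (ShortComplex.mk (pushout.inl v S.f) (pushout.desc 0 S.g (by simp))
      (pushout.inl_desc _ _ _)).ShortExact := by
  have := hS.mono_f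
  have := hS.epi_g
  have : Epi (pushout.desc 0 S.g (by simp) : pushout v S.f ⟶ S.X₃) :=
    epi_of_epi_fac (pushout.inr_desc _ _ _)
  refine .mk' (ShortComplex.exact_of_g_is_cokernel _
    (CokernelCofork.IsColimit.ofπ' _ _ fun t ht => ?_)) inferInstance this
  have ht' : S.f ≫ pushout.inr v S.f ≫ t = 0 := by rw [← pushout.condition_assoc, ht, comp_zero]
  exact ⟨hS.exact.desc _ ht', pushout.hom_ext (by rw [pushout.inl_desc_assoc, zero_comp, ht])
    (by rw [pushout.inr_desc_assoc, hS.exact.g_desc])⟩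

lemma pullback_snd (hS : S.ShortExact) {Z : A} (ι : Z ⟶ S.X₃) :
    (ShortComplex.mk (pullback.lift S.f 0 (by simp) : S.X₁ ⟶ pullback S.g ι)
      (pullback.snd S.g ι) (pullback.lift_snd _ _ _)).ShortExact := by
  have := hS.mono_f
  have := hS.epi_g
  have : Mono (pullback.lift S.f 0 (by simp) : S.X₁ ⟶ pullback S.g ι) :=
    mono_of_mono_fac (pullback.lift_fst _ _ _)
  refine .mk' (ShortComplex.exact_of_f_is_kernel _
    (KernelFork.IsLimit.ofι' _ _ fun t ht => ?_)) this inferInstance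
  have ht' : (t ≫ pullback.fst S.g ι) ≫ S.g = 0 := by
    rw [assoc, pullback.condition, reassoc_of% ht, zero_comp]
  exact ⟨hS.exact.lift _ ht', pullback.hom_ext (by rw [assoc, pullback.lift_fst, hS.exact.lift_f])
    (by rw [assoc, pullback.lift_snd, comp_zero, ht])⟩

lemma pullback_fst (hS : S.ShortExact) {E : A} (p : E ⟶ S.X₂) [Epi p] :
    (ShortComplex.mk (pullback.fst p S.f) (p ≫ S.g)
      (by rw [pullback.condition_assoc, S.zero, comp_zero])).ShortExact := by
  have := hS.mono_f
  have := hS.epi_g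
  refine .mk' (ShortComplex.exact_of_f_is_kernel _
    (KernelFork.IsLimit.ofι' _ _ fun t ht => ?_)) inferInstance (epi_comp _ _)
  have ht' : (t ≫ p) ≫ S.g = 0 := by rw [assoc, ht]
  exact ⟨pullback.lift t _ (hS.exact.lift_f _ ht').symm, pullback.lift_fst _ _ _⟩

end CategoryTheory.ShortComplex.ShortExact

namespace Ext1Vanishes

variable {S : ShortComplex A} {Y : A}

lemma exists_extension (hS : S.ShortExact) (h : Ext1Vanishes S.X₃ Y) (v : S.X₁ ⟶ Y) :
    ∃ u : S.X₂ ⟶ Y, S.f ≫ u = v := by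
  obtain ⟨r, hr⟩ := ext1Vanishes_iff_exists_retraction.1 h _ _ _ _ (hS.pushout_inl v)
  exact ⟨pushout.inr v S.f ≫ r, by rw [← pushout.condition_assoc, hr, comp_id]⟩

lemma of_shortExact (hS : S.ShortExact) (h₁ : Ext1Vanishes S.X₁ Y) (h₃ : Ext1Vanishes S.X₃ Y) :
    Ext1Vanishes S.X₂ Y := by
  refine ext1Vanishes_iff_exists_retraction.2 fun E f p w hE => ?_
  have := hE.epi_g
  obtain ⟨r₁, hr₁⟩ := ext1Vanishes_iff_exists_retraction.1 h₁ _ _ _ _ (hE.pullback_snd S.f)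
  -- `pullback p S.f ⟶ E` has cokernel `S.X₃`, so the retraction `r₁` extends to `E`
  obtain ⟨r, hr⟩ := exists_extension (hS.pullback_fst p) h₃ r₁
  exact ⟨r, by rw [← pullback.lift_fst (f := p) (g := S.f) f 0 (by simp [w]), assoc, hr, hr₁]⟩

lemma exists_section_extending (hS : S.ShortExact) {E : A} {f : Y ⟶ E} {g : E ⟶ S.X₂}
    {w : f ≫ g = 0} (hE : (ShortComplex.mk f g w).ShortExact) (h₂ : Ext1Vanishes S.X₂ Y)
    (h₃ : Ext1Vanishes S.X₃ Y) (φ : S.X₁ ⟶ E) (hφ : φ ≫ g = S.f) :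
    ∃ s : S.X₂ ⟶ E, s ≫ g = 𝟙 _ ∧ S.f ≫ s = φ := by
  obtain ⟨s₀, hs₀⟩ := h₂ E f g w hE
  have := hE.mono_f
  obtain ⟨u, hu⟩ := exists_extension hS h₃
    (hE.exact.lift (φ - S.f ≫ s₀) (by simp [Preadditive.sub_comp, hφ, hs₀]))
  refine ⟨s₀ + u ≫ f, by simp [hs₀, w], ?_⟩
  rw [Preadditive.comp_add, reassoc_of% hu, hE.exact.lift_f, add_sub_cancel]

end Ext1Vanishes

namespace HomologicalComplex

variable {ι : Type*} {c : ComplexShape ι} (K : HomologicalComplex A c) {i j : ι}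

lemma shortExact_iCycles_toCycles (hij : c.Rel i j) (hj : K.ExactAt j) :
    (ShortComplex.mk (K.iCycles i) (K.toCycles i j)
      (by rw [← cancel_mono (K.iCycles j)]; simp)).ShortExact := by
  have : Epi (K.toCycles i j) := Preadditive.epi_of_isZero_cokernel' _
    (K.homologyIsCokernel i j (c.prev_eq' hij)) ((K.exactAt_iff_isZero_homology j).1 hj)
  refine .mk' (ShortComplex.exact_of_f_is_kernel _
    (KernelFork.IsLimit.ofι' _ _ fun t ht => ?_)) inferInstance this
  exact KernelFork.IsLimit.lift' (K.cyclesIsKernel i j (c.next_eq' hij)) t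
    (by rw [← K.toCycles_i, reassoc_of% ht, zero_comp])

end HomologicalComplex

namespace disk

variable (n : ℤ) (C : A)

lemma isZero_X {k : ℤ} (h : ¬(k = n ∨ k = n - 1)) : IsZero ((disk n C).X k) := by
  change IsZero (ite _ _ _)
  rw [if_neg h]
  exact isZero_zero A

noncomputable def XIso {k : ℤ} (h : k = n ∨ k = n - 1) : (disk n C).X k ≅ C :=
  eqToIso (show (disk n C).X k = C from if_pos h)

lemma d_self :
    (disk n C).d n (n - 1) = (XIso n C (.inl rfl)).hom ≫ (XIso n C (.inr rfl)).inv := by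
  rw [XIso, XIso, eqToIso.hom, eqToIso.inv, eqToHom_trans]
  exact dif_pos (⟨rfl, rfl⟩ : n = n ∧ n - 1 = n - 1)

lemma d_eq_zero {i j : ℤ} (h : ¬(i = n ∧ j = n - 1)) : (disk n C).d i j = 0 :=
  dif_neg h

variable {n C}

noncomputable def desc {Y : ChainComplex A ℤ} (φ : C ⟶ Y.X n) : disk n C ⟶ Y where
  f k := if h : k = n then (XIso n C (.inl h)).hom ≫ φ ≫ eqToHom (by rw [h])
    else if h' : k = n - 1 then (XIso n C (.inr h')).hom ≫ φ ≫ Y.d n k else 0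
  comm' i j hij := by
    obtain rfl : j = i - 1 := by simp only [ComplexShape.down_Rel] at hij; omega
    by_cases hi : i = n
    · subst hi
      simp [d_self, show i - 1 ≠ i by omega]
    · rw [d_eq_zero n C (by tauto), zero_comp]
      by_cases hi' : i = n - 1 <;> simp [hi, hi']

variable {Y : ChainComplex A ℤ} (φ : C ⟶ Y.X n)

lemma desc_f_self : (desc φ).f n = (XIso n C (.inl rfl)).hom ≫ φ := by
  simp [desc]

lemma desc_f_pred : (desc φ).f (n - 1) = (XIso n C (.inr rfl)).hom ≫ φ ≫ Y.d n (n - 1) := by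
  simp [desc]

noncomputable def map {B : A} (φ : B ⟶ C) : disk n B ⟶ disk n C :=
  desc (φ ≫ (XIso n C (.inl rfl)).inv)

lemma map_f {B : A} (φ : B ⟶ C) {k : ℤ} (h : k = n ∨ k = n - 1) :
    (map φ).f k = (XIso n B h).hom ≫ φ ≫ (XIso n C h).inv := by
  rcases h with rfl | rfl
  · simp [map, desc_f_self]
  · simp [map, desc_f_pred, d_self]

lemma map_comp {B D : A} (φ : B ⟶ C) (ψ : C ⟶ D) : map (n := n) φ ≫ map ψ = map (φ ≫ ψ) := by
  ext k
  by_cases h : k = n ∨ k = n - 1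
  · simp [map_f _ h]
  · exact (isZero_X n B h).eq_of_src _ _

lemma map_zero {B : A} : map (n := n) (0 : B ⟶ C) = 0 := by
  ext k
  by_cases h : k = n ∨ k = n - 1
  · simp [map_f _ h]
  · exact (isZero_X n B h).eq_of_src _ _

lemma shortExact_map {S : ShortComplex A} (hS : S.ShortExact) :
    (ShortComplex.mk (map (n := n) S.f) (map S.g)
      (by rw [map_comp, S.zero, map_zero])).ShortExact := by
  refine HomologicalComplex.shortExact_of_degreewise_shortExact _ fun k => ?_
  by_cases h : k = n ∨ k = n - 1
  · refine ShortComplex.shortExact_of_iso (ShortComplex.isoMk (XIso n _ h).symm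
      (XIso n _ h).symm (XIso n _ h).symm ?_ ?_) hS <;>
    simp only [Iso.symm_hom, ShortComplex.map_f, ShortComplex.map_g, HomologicalComplex.eval_map,
      map_f _ h] <;>
    exact Iso.inv_hom_id_assoc _ _
  · exact .mk' (ShortComplex.exact_of_isZero_X₂ _ (isZero_X n _ h)) ((isZero_X n _ h).mono _)
      ((isZero_X n _ h).epi _)

end disk

lemma Ext1Vanishes.of_disk {n : ℤ} {C : A} {Y : ChainComplex A ℤ}
    (h : Ext1Vanishes (disk n C) Y) : Ext1Vanishes C (Y.X n) := by
  refine ext1Vanishes_iff_exists_retraction.2 fun E f g w hS => ?_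
  obtain ⟨u, hu⟩ := h.exists_extension (disk.shortExact_map (n := n) hS) (disk.desc (𝟙 (Y.X n)))
  refine ⟨(disk.XIso n E (.inl rfl)).inv ≫ u.f n, ?_⟩
  rw [← cancel_epi (disk.XIso n (Y.X n) (.inl rfl)).hom]
  simpa [disk.map_f, disk.desc_f_self] using congr_arg (fun φ => φ.f n) hu

namespace ChainComplex

lemma exists_hom_of_forall_exists_pred {V : Type*} [Category V] [HasZeroMorphisms V]
    {X E : ChainComplex V ℤ} (P : ∀ n, (X.X n ⟶ E.X n) → Prop) (N : ℤ) (hP : ∀ n ≥ N, P n 0)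
    (step : ∀ n σ, P n σ → ∃ σ', P (n - 1) σ' ∧ X.d n (n - 1) ≫ σ' = σ ≫ E.d n (n - 1)) :
    ∃ φ : X ⟶ E, ∀ n, P n (φ.f n) := by
  choose pred hpred hcomm using step
  let σ (n : ℤ) : {σ : X.X n ⟶ E.X n // P n σ} :=
    Int.inductionOn' (motive := fun n => {σ : X.X n ⟶ E.X n // P n σ}) n N ⟨0, hP N le_rfl⟩
      (fun k hk _ => ⟨0, hP (k + 1) (by omega)⟩) (fun k _ s => ⟨pred k s.1 s.2, hpred k s.1 s.2⟩)
  have hσ_zero (n : ℤ) (hn : N ≤ n) : (σ n).1 = 0 := by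
    induction n, hn using Int.leInduction with
    | base => simp [σ, Int.inductionOn'_self]
    | succ k hk _ => simp [σ, Int.inductionOn'_add_one hk]
  have hσ_pred (n : ℤ) (hn : n ≤ N) : (σ (n - 1)).1 = pred n (σ n).1 (σ n).2 := by
    simp [σ, Int.inductionOn'_sub_one hn]
  refine ⟨{ f n := (σ n).1, comm' i j hij := ?_ }, fun n => (σ n).2⟩
  obtain rfl : j = i - 1 := by simp only [ComplexShape.down_Rel] at hij; omega
  by_cases hi : i ≤ N
  · rw [hσ_pred i hi, hcomm]
  · simp [hσ_zero i (by omega), hσ_zero (i - 1) (by omega)]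

variable {X Y E : ChainComplex A ℤ}

def IsCyclesPreservingSection (g : E ⟶ X) (n : ℤ) (σ : X.X n ⟶ E.X n) : Prop :=
  σ ≫ g.f n = 𝟙 _ ∧ X.iCycles n ≫ σ ≫ E.d n (n - 1) = 0

lemma isCyclesPreservingSection_zero (g : E ⟶ X) {n : ℤ} (hn : IsZero (X.X n)) :
    IsCyclesPreservingSection g n 0 :=
  ⟨hn.eq_of_src _ _, by simp⟩

lemma IsCyclesPreservingSection.exists_pred {f : Y ⟶ E} {g : E ⟶ X} {w : f ≫ g = 0}
    (hS : (ShortComplex.mk f g w).ShortExact) {n : ℤ} (hn : X.ExactAt (n - 1))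
    (hn' : X.ExactAt (n - 1 - 1)) (h₁ : Ext1Vanishes (X.cycles (n - 1)) (Y.X (n - 1)))
    (h₂ : Ext1Vanishes (X.cycles (n - 1 - 1)) (Y.X (n - 1))) {σ : X.X n ⟶ E.X n}
    (hσ : IsCyclesPreservingSection g n σ) :
    ∃ σ', IsCyclesPreservingSection g (n - 1) σ' ∧ X.d n (n - 1) ≫ σ' = σ ≫ E.d n (n - 1) := by
  obtain ⟨hσg, hσZ⟩ := hσ
  have hT := X.shortExact_iCycles_toCycles (by simp : (ComplexShape.down ℤ).Rel n (n - 1)) hn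
  have hT' := X.shortExact_iCycles_toCycles
    (by simp : (ComplexShape.down ℤ).Rel (n - 1) (n - 1 - 1)) hn'
  have hE : (ShortComplex.mk (f.f (n - 1)) (g.f (n - 1))
      (by rw [← HomologicalComplex.comp_f, w, HomologicalComplex.zero_f])).ShortExact :=
    (HomologicalComplex.shortExact_iff_degreewise_shortExact _).1 hS (n - 1)
  have := hT.epi_g
  let φ : X.cycles (n - 1) ⟶ E.X (n - 1) := hT.exact.desc (σ ≫ E.d n (n - 1)) hσZ
  have hφ : X.toCycles n (n - 1) ≫ φ = σ ≫ E.d n (n - 1) := hT.exact.g_desc _ _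
  have hφg : φ ≫ g.f (n - 1) = X.iCycles (n - 1) := by
    rw [← cancel_epi (X.toCycles n (n - 1)), reassoc_of% hφ, ← g.comm, reassoc_of% hσg,
      X.toCycles_i]
  obtain ⟨s, hs, hsφ⟩ := Ext1Vanishes.exists_section_extending hT' hE
    (Ext1Vanishes.of_shortExact hT' h₁ h₂) h₂ φ hφg
  refine ⟨s, ⟨hs, ?_⟩, ?_⟩
  · rw [reassoc_of% hsφ, ← cancel_epi (X.toCycles n (n - 1)), reassoc_of% hφ]
    simp
  · rw [← X.toCycles_i n (n - 1), assoc, hsφ, hφ]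

end ChainComplex

theorem cotorsionPair_bddAbove_acyclic_of_disks
    (𝒳 𝒴 : Set (ChainComplex A ℤ))
    (h𝒳 : ∀ K, K ∈ 𝒳 ↔ ∀ L ∈ 𝒴, Ext1Vanishes K L)
    (𝒞 : Set A)
    (hD : ∀ (n : ℤ) (C : A), C ∈ 𝒞 → disk n C ∈ 𝒳)
    (X : ChainComplex A ℤ) (hbdd : ∃ N : ℤ, ∀ n > N, IsZero (X.X n))
    (hacyclic : ∀ n, X.ExactAt n)
    (hcycles : ∀ n, X.cycles n ∈ 𝒞) :
    X ∈ 𝒳 := by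
  obtain ⟨N, hN⟩ := hbdd
  refine (h𝒳 X).2 fun Y hY E f g w hS => ?_
  have hZ (k m : ℤ) : Ext1Vanishes (X.cycles k) (Y.X m) :=
    ((h𝒳 _).1 (hD m _ (hcycles k)) Y hY).of_disk
  obtain ⟨σ, hσ⟩ := ChainComplex.exists_hom_of_forall_exists_pred
    (ChainComplex.IsCyclesPreservingSection g) (N + 1)
    (fun n hn => ChainComplex.isCyclesPreservingSection_zero g (hN n (by omega)))
    (fun n _ hσ => hσ.exists_pred hS (hacyclic _) (hacyclic _) (hZ _ _) (hZ _ _))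
  exact ⟨σ, by ext n; simpa using (hσ n).1⟩
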